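/- arXiv:math/0406433 — 2 statements merged into one kernel-verified Lean document; each statement's English description precedes it below -/
import Mathlib

section
/- The rational function g(a2) = (1 − 4a2 + a2²)/(−4a2 + 2a2² − 2a2³ + 4a2⁴) has a unique solution T of g(a2) = 1 on the interval (−1, 0); moreover g(a2) < 1 for a2 ∈ (−1, T) and g(a2) > 1 for a2 ∈ (T, 0). -/
private lemma hmono5 : ∀ a b : ℝ, -1 ≤ a → a < b → b ≤ 0 →
    1 - a^2 + 2*a^3 - 4*a^4 < 1 - b^2 + 2*b^3 - 4*b^4 := by
  intro a b ha hab hb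
  have ha0 : a < 0 := lt_of_lt_of_le hab hb
  nlinarith [sq_nonneg (a+b), sq_nonneg (a-b), sq_nonneg a, sq_nonneg b,
    mul_pos (sub_pos.2 hab) (neg_pos.2 ha0),
    mul_nonneg (mul_nonneg (sub_pos.2 hab).le (neg_nonneg.2 hb)) (sq_nonneg a),
    mul_nonneg (mul_nonneg (sub_pos.2 hab).le (neg_nonneg.2 hb)) (sq_nonneg b),
    mul_nonneg (mul_nonneg (sub_pos.2 hab).le (neg_nonneg.2 ha0.le)) (sq_nonneg a),
    mul_nonneg (mul_nonneg (sub_pos.2 hab).le (neg_nonneg.2 ha0.le)) (sq_nonneg b),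
    mul_nonneg (sub_pos.2 hab).le (sq_nonneg (a+b)),
    mul_nonneg (mul_nonneg (sub_pos.2 hab).le (neg_nonneg.2 ha0.le)) (neg_nonneg.2 hb)]

private lemma den_pos5 : ∀ x : ℝ, -1 < x → x < 0 →
    0 < -4 * x + 2 * x ^ 2 - 2 * x ^ 3 + 4 * x ^ 4 := by
  intro x _ hx
  nlinarith [sq_nonneg x, sq_nonneg (x^2), mul_pos (neg_pos.2 hx) (neg_pos.2 hx)]

private lemma key5 : ∀ x : ℝ, -1 < x → x < 0 →
    ((1 - 4 * x + x ^ 2) / (-4 * x + 2 * x ^ 2 - 2 * x ^ 3 + 4 * x ^ 4) = 1 ↔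
      1 - x^2 + 2*x^3 - 4*x^4 = 0) ∧
    ((1 - 4 * x + x ^ 2) / (-4 * x + 2 * x ^ 2 - 2 * x ^ 3 + 4 * x ^ 4) < 1 ↔
      1 - x^2 + 2*x^3 - 4*x^4 < 0) ∧
    (1 < (1 - 4 * x + x ^ 2) / (-4 * x + 2 * x ^ 2 - 2 * x ^ 3 + 4 * x ^ 4) ↔
      0 < 1 - x^2 + 2*x^3 - 4*x^4) := by
  intro x h1 h2
  have hd := den_pos5 x h1 h2
  refine ⟨?_, ?_, ?_⟩
  · rw [div_eq_one_iff_eq hd.ne']; constructor <;> intro h <;> linarith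
  · rw [div_lt_one hd]; constructor <;> intro h <;> linarith
  · rw [one_lt_div hd]; constructor <;> intro h <;> linarith

/-- The function
`g(a2) = (1 − 4a2 + a2²)/(−4a2 + 2a2² − 2a2³ + 4a2⁴)` has a unique solution `T` of
`g(a2) = 1` on `(−1, 0)`; moreover `g < 1` on `(−1, T)` and `g > 1` on `(T, 0)`. -/
theorem stmt_5 :
    ∃ T ∈ Set.Ioo (-1 : ℝ) 0,
      (1 - 4 * T + T ^ 2) / (-4 * T + 2 * T ^ 2 - 2 * T ^ 3 + 4 * T ^ 4) = 1 ∧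
      (∀ T' ∈ Set.Ioo (-1 : ℝ) 0,
        (1 - 4 * T' + T' ^ 2) / (-4 * T' + 2 * T' ^ 2 - 2 * T' ^ 3 + 4 * T' ^ 4) = 1 →
          T' = T) ∧
      (∀ x ∈ Set.Ioo (-1 : ℝ) T,
        (1 - 4 * x + x ^ 2) / (-4 * x + 2 * x ^ 2 - 2 * x ^ 3 + 4 * x ^ 4) < 1) ∧
      (∀ x ∈ Set.Ioo T (0 : ℝ),
        1 < (1 - 4 * x + x ^ 2) / (-4 * x + 2 * x ^ 2 - 2 * x ^ 3 + 4 * x ^ 4)) := by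
  have hcont : ContinuousOn (fun x : ℝ => 1 - x^2 + 2*x^3 - 4*x^4) (Set.Icc (-1:ℝ) 0) :=
    (by continuity : Continuous fun x : ℝ => 1 - x^2 + 2*x^3 - 4*x^4).continuousOn
  have hmem : (0:ℝ) ∈ Set.Ioo ((fun x : ℝ => 1 - x^2 + 2*x^3 - 4*x^4) (-1))
      ((fun x : ℝ => 1 - x^2 + 2*x^3 - 4*x^4) 0) := by norm_num
  obtain ⟨T, hT, hT0⟩ := intermediate_value_Ioo (by norm_num : (-1:ℝ) ≤ 0) hcont hmem
  simp only at hT0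
  refine ⟨T, hT, (key5 T hT.1 hT.2).1.2 hT0, ?_, ?_, ?_⟩
  · intro T' hT' heq
    have h0 : 1 - T'^2 + 2*T'^3 - 4*T'^4 = 0 := (key5 T' hT'.1 hT'.2).1.1 heq
    rcases lt_trichotomy T' T with h | h | h
    · exact absurd (hmono5 T' T hT'.1.le h hT.2.le) (by rw [h0, hT0]; simp)
    · exact h
    · exact absurd (hmono5 T T' hT.1.le h hT'.2.le) (by rw [h0, hT0]; simp)
  · intro x hx
    have hx0 : x < 0 := lt_trans hx.2 hT.2
    refine ((key5 x hx.1 hx0).2.1).2 ?_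
    have := hmono5 x T hx.1.le hx.2 hT.2.le
    linarith [hT0]
  · intro x hx
    have hx1 : -1 < x := lt_trans hT.1 hx.1
    refine ((key5 x hx1 hx.2).2.2).2 ?_
    have := hmono5 T x hT.1.le hx.1 hx.2.le
    linarith [hT0]
end

section
/- For k ≥ p1 and any h ≥ 1, the direct-predictor constant satisfies f_{2,h}(k+1) > f_{2,h}(k): concretely, tr(Γ⁻¹(k+1)·cov(Σ_{j=0}^{h−1} b_j x_j(k+1))) > tr(Γ⁻¹(k)·cov(Σ_{j=0}^{h−1} b_j x_j(k))), where Γ(k) = E(x_1(k)x_1(k)') is the autocovariance matrix. -/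
/-!
Write `Γ(k+1)` as `Γ(k)` bordered by the column `g` and put `q = (-Γ(k)⁻¹ g, 1)`,
`d = qᵀ Γ(k+1) q > 0`. The Schur complement formula gives
`Γ(k+1)⁻¹ = diag(Γ(k)⁻¹, 0) + q qᵀ / d`, and `C(k)` is the leading block of `C(k+1)`, so the trace
grows by `qᵀ C(k+1) q / d`. This is the variance of `X = ∑_{i ≤ k, r < h} q_i b_r x_{r-i}`, in which
`x_{-k}` occurs only once, with coefficient `q_k b_0 = 1`.

A nontrivial finite combination of the `x_t` has positive variance: if it vanished a.s., so would
all its time shifts (the variance only depends on `γ`), hence also the AR filter applied to it.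
That filtered variable is the same combination of the innovations `ε_t`, whose covariance with
`ε_m` is `σ²` times the total coefficient of `x_m`.
-/

open MeasureTheory ProbabilityTheory Finset Matrix

namespace Matrix

variable {K : Type*} [Field K] {n : ℕ}

def extendZero (M : Matrix (Fin n) (Fin n) K) : Matrix (Fin (n + 1)) (Fin (n + 1)) K :=
  Fin.snoc (fun i => Fin.snoc (M i) 0) 0

@[simp] lemma extendZero_castSucc_castSucc (M : Matrix (Fin n) (Fin n) K) (i j : Fin n) :
    extendZero M i.castSucc j.castSucc = M i j := by
  simp [extendZero]

@[simp] lemma extendZero_last_left (M : Matrix (Fin n) (Fin n) K) (j : Fin (n + 1)) :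
    extendZero M (Fin.last n) j = 0 := by
  simp [extendZero]

@[simp] lemma extendZero_last_right (M : Matrix (Fin n) (Fin n) K) (i : Fin (n + 1)) :
    extendZero M i (Fin.last n) = 0 := by
  induction i using Fin.lastCases <;> simp [extendZero]

lemma trace_extendZero_mul (M : Matrix (Fin n) (Fin n) K)
    (C : Matrix (Fin (n + 1)) (Fin (n + 1)) K) :
    trace (extendZero M * C) = trace (M * C.submatrix Fin.castSucc Fin.castSucc) := by
  simp [trace, mul_apply, Fin.sum_univ_castSucc]

variable (G : Matrix (Fin (n + 1)) (Fin (n + 1)) K)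

noncomputable def schurVec : Fin (n + 1) → K :=
  Fin.snoc (-((G.submatrix Fin.castSucc Fin.castSucc)⁻¹ *ᵥ fun i => G i.castSucc (Fin.last n))) 1

@[simp] lemma schurVec_last : G.schurVec (Fin.last n) = 1 := by simp [schurVec]

lemma schurVec_castSucc (i : Fin n) : G.schurVec i.castSucc =
    -((G.submatrix Fin.castSucc Fin.castSucc)⁻¹ *ᵥ fun i => G i.castSucc (Fin.last n)) i := by
  simp [schurVec]

variable {G}

lemma mulVec_schurVec_castSucc (hA : IsUnit (G.submatrix Fin.castSucc Fin.castSucc).det)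
    (i : Fin n) : (G *ᵥ G.schurVec) i.castSucc = 0 := by
  have h := congrFun (mulVec_mulVec (fun i => G i.castSucc (Fin.last n))
    (G.submatrix Fin.castSucc Fin.castSucc) (G.submatrix Fin.castSucc Fin.castSucc)⁻¹) i
  rw [mul_nonsing_inv _ hA, one_mulVec] at h
  simp only [mulVec, dotProduct, Fin.sum_univ_castSucc, schurVec_castSucc, schurVec_last] at h ⊢
  simp only [submatrix_apply, mul_neg, sum_neg_distrib, mul_one] at h ⊢
  rw [h, neg_add_cancel]

lemma mulVec_schurVec (hA : IsUnit (G.submatrix Fin.castSucc Fin.castSucc).det) :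
    G *ᵥ G.schurVec = Pi.single (Fin.last n) (G.schurVec ⬝ᵥ G *ᵥ G.schurVec) := by
  have hlast : G.schurVec ⬝ᵥ G *ᵥ G.schurVec = (G *ᵥ G.schurVec) (Fin.last n) := by
    simp [dotProduct, Fin.sum_univ_castSucc, mulVec_schurVec_castSucc hA]
  ext i
  induction i using Fin.lastCases with
  | last => simp [hlast]
  | cast i => simp [mulVec_schurVec_castSucc hA, (Fin.castSucc_lt_last i).ne]

theorem inv_eq_extendZero_add (hG : G.IsSymm)
    (hA : IsUnit (G.submatrix Fin.castSucc Fin.castSucc).det)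
    (hd : G.schurVec ⬝ᵥ G *ᵥ G.schurVec ≠ 0) :
    G⁻¹ = extendZero (G.submatrix Fin.castSucc Fin.castSucc)⁻¹ +
      (G.schurVec ⬝ᵥ G *ᵥ G.schurVec)⁻¹ • vecMulVec G.schurVec G.schurVec := by
  set A := G.submatrix Fin.castSucc Fin.castSucc
  refine inv_eq_right_inv ?_
  rw [mul_add, Matrix.mul_smul, mul_vecMulVec, mulVec_schurVec hA]
  generalize G.schurVec ⬝ᵥ G *ᵥ G.schurVec = d at hd ⊢
  ext i j
  induction j using Fin.lastCases with
  | last =>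
    induction i using Fin.lastCases <;>
      simp [mul_apply, vecMulVec_apply, hd, (Fin.castSucc_lt_last _).ne]
  | cast j =>
    induction i using Fin.lastCases with
    | last =>
      have hsymm : ∀ l, G (Fin.last n) l.castSucc * A⁻¹ l j = A⁻¹ j l * G l.castSucc (Fin.last n) :=
        fun l => by rw [hG.apply, (hG.submatrix Fin.castSucc).inv.apply, mul_comm]
      simp [mul_apply, Fin.sum_univ_castSucc, vecMulVec_apply, hd, schurVec_castSucc, hsymm,
        mulVec, dotProduct, (Fin.castSucc_lt_last _).ne', A]
    | cast i =>
      have h := congrFun (congrFun (mul_nonsing_inv A hA) i) j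
      simp [mul_apply, Fin.sum_univ_castSucc, vecMulVec_apply, one_apply, A] at h ⊢
      exact h

theorem trace_inv_mul_eq_add (hG : G.IsSymm)
    (hA : IsUnit (G.submatrix Fin.castSucc Fin.castSucc).det)
    (hd : G.schurVec ⬝ᵥ G *ᵥ G.schurVec ≠ 0) (C : Matrix (Fin (n + 1)) (Fin (n + 1)) K) :
    trace (G⁻¹ * C) = trace ((G.submatrix Fin.castSucc Fin.castSucc)⁻¹ *
        C.submatrix Fin.castSucc Fin.castSucc) +
      (G.schurVec ⬝ᵥ C *ᵥ G.schurVec) / (G.schurVec ⬝ᵥ G *ᵥ G.schurVec) := by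
  rw [inv_eq_extendZero_add hG hA hd, add_mul, trace_add, trace_extendZero_mul, smul_mul,
    trace_smul, vecMulVec_mul, trace_vecMulVec, smul_eq_mul, div_eq_inv_mul,
    dotProduct_mulVec _ C, dotProduct_comm (_ ᵥ* C)]

theorem trace_inv_mul_lt_of_posDef {G C : Matrix (Fin (n + 1)) (Fin (n + 1)) ℝ} (hG : G.PosDef)
    (hC : 0 < G.schurVec ⬝ᵥ C *ᵥ G.schurVec) :
    trace ((G.submatrix Fin.castSucc Fin.castSucc)⁻¹ * C.submatrix Fin.castSucc Fin.castSucc) <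
      trace (G⁻¹ * C) := by
  have hq : G.schurVec ≠ 0 := fun h => by simpa using congrFun h (Fin.last n)
  have hd : 0 < G.schurVec ⬝ᵥ G *ᵥ G.schurVec := by simpa using hG.dotProduct_mulVec_pos hq
  have hsymm : G.IsSymm := by
    have := hG.isHermitian
    rwa [IsHermitian, conjTranspose_eq_transpose_of_trivial] at this
  have hA := (hG.submatrix (Fin.castSucc_injective n)).det_pos.ne'.isUnit
  rw [trace_inv_mul_eq_add hsymm hA hd.ne']
  exact lt_add_of_pos_right _ (div_pos hC hd)

end Matrix

section Stationary

variable {Ω : Type*} [MeasurableSpace Ω] {μ : Measure Ω} {x ε : ℤ → Ω → ℝ} {γ : ℤ → ℝ}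

lemma integrable_mul_of_mem_span (hint : ∀ s t : ℤ, Integrable (fun ω => x s ω * x t ω) μ)
    {Y Z : Ω → ℝ} (hY : Y ∈ Submodule.span ℝ (Set.range x))
    (hZ : Z ∈ Submodule.span ℝ (Set.range x)) : Integrable (Y * Z) μ := by
  induction hY using Submodule.span_induction with
  | mem _ hY =>
    obtain ⟨s, rfl⟩ := hY
    induction hZ using Submodule.span_induction with
    | mem _ hZ =>
      obtain ⟨t, rfl⟩ := hZ
      exact hint s t
    | zero => simp
    | add _ _ _ _ h₁ h₂ => simpa only [mul_add] using h₁.add h₂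
    | smul c _ _ h => simpa only [mul_smul_comm] using h.smul c
  | zero => simp
  | add _ _ _ _ h₁ h₂ => simpa only [add_mul] using h₁.add h₂
  | smul c _ _ h => simpa only [smul_mul_assoc] using h.smul c

lemma integral_sum_smul_mul_sum_smul (hint : ∀ s t : ℤ, Integrable (fun ω => x s ω * x t ω) μ)
    (hγ : ∀ s t : ℤ, ∫ ω, x s ω * x t ω ∂μ = γ (s - t))
    {ι κ : Type*} (S : Finset ι) (T : Finset κ) (c : ι → ℝ) (e : κ → ℝ) (s : ι → ℤ) (t : κ → ℤ) :
    μ[(∑ α ∈ S, c α • x (s α)) * ∑ β ∈ T, e β • x (t β)] =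
      ∑ α ∈ S, ∑ β ∈ T, c α * e β * γ (s α - t β) := by
  simp only [Pi.mul_apply, Finset.sum_apply, Pi.smul_apply, smul_eq_mul, sum_mul_sum]
  rw [integral_finsetSum _ fun α _ => integrable_finsetSum _ fun β _ =>
    ((hint (s α) (t β)).const_mul (c α * e β)).congr (ae_of_all _ fun ω => by ring)]
  refine sum_congr rfl fun α _ => ?_
  rw [integral_finsetSum _ fun β _ =>
    ((hint (s α) (t β)).const_mul (c α * e β)).congr (ae_of_all _ fun ω => by ring)]
  refine sum_congr rfl fun β _ => ?_
  rw [← hγ, ← integral_const_mul]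
  exact integral_congr_ae (ae_of_all _ fun ω => by ring)

lemma integral_shift_mul_self (hint : ∀ s t : ℤ, Integrable (fun ω => x s ω * x t ω) μ)
    (hγ : ∀ s t : ℤ, ∫ ω, x s ω * x t ω ∂μ = γ (s - t))
    {ι : Type*} (S : Finset ι) (c : ι → ℝ) (s : ι → ℤ) (n : ℤ) :
    μ[(∑ α ∈ S, c α • x (s α + n)) * ∑ α ∈ S, c α • x (s α + n)] =
      μ[(∑ α ∈ S, c α • x (s α)) * ∑ α ∈ S, c α • x (s α)] := by
  simp only [integral_sum_smul_mul_sum_smul hint hγ, add_sub_add_right_eq_sub]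

lemma shift_ae_eq_zero_of_integral_mul_self_eq_zero
    (hint : ∀ s t : ℤ, Integrable (fun ω => x s ω * x t ω) μ)
    (hγ : ∀ s t : ℤ, ∫ ω, x s ω * x t ω ∂μ = γ (s - t))
    {ι : Type*} {S : Finset ι} {c : ι → ℝ} {s : ι → ℤ}
    (h0 : μ[(∑ α ∈ S, c α • x (s α)) * ∑ α ∈ S, c α • x (s α)] = 0) (n : ℤ) :
    ∑ α ∈ S, c α • x (s α + n) =ᵐ[μ] 0 := by
  have hmem : ∑ α ∈ S, c α • x (s α + n) ∈ Submodule.span ℝ (Set.range x) :=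
    Submodule.sum_smul_mem _ _ fun α _ => Submodule.subset_span ⟨_, rfl⟩
  have h := (integral_eq_zero_iff_of_nonneg (fun ω => mul_self_nonneg _)
    (integrable_mul_of_mem_span hint hmem hmem)).mp
    ((integral_shift_mul_self hint hγ S c s n).trans h0)
  filter_upwards [h] with ω hω
  exact mul_self_eq_zero.mp hω

lemma ae_eq_sub_sum_of_AR {I : Finset ℕ} {a : ℕ → ℝ}
    (hAR : ∀ t : ℤ, ∀ᵐ ω ∂μ, x (t + 1) ω = (∑ i ∈ I, a i * x (t + 1 - (i : ℤ)) ω) + ε (t + 1) ω)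
    (t : ℤ) : ε t =ᵐ[μ] x t - ∑ i ∈ I, a i • x (t - i) := by
  filter_upwards [hAR (t - 1)] with ω hω
  simp only [sub_add_cancel] at hω
  simp [hω]

lemma integrable_mul_of_ae_eq_sub_sum (hint : ∀ s t : ℤ, Integrable (fun ω => x s ω * x t ω) μ)
    {I : Finset ℕ} {a : ℕ → ℝ} (hε : ∀ t : ℤ, ε t =ᵐ[μ] x t - ∑ i ∈ I, a i • x (t - i))
    (s t : ℤ) : Integrable (ε s * ε t) μ := by
  have hmem : ∀ t, x t - ∑ i ∈ I, a i • x (t - i) ∈ Submodule.span ℝ (Set.range x) := fun t =>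
    Submodule.sub_mem _ (Submodule.subset_span ⟨t, rfl⟩)
      (Submodule.sum_smul_mem _ _ fun i _ => Submodule.subset_span ⟨t - i, rfl⟩)
  exact (integrable_mul_of_mem_span hint (hmem s) (hmem t)).congr ((hε s).mul (hε t)).symm

lemma sum_smul_ae_eq_sub_sum {I : Finset ℕ} {a : ℕ → ℝ}
    (hε : ∀ t : ℤ, ε t =ᵐ[μ] x t - ∑ i ∈ I, a i • x (t - i))
    {ι : Type*} (S : Finset ι) (c : ι → ℝ) (s : ι → ℤ) :
    ∑ α ∈ S, c α • ε (s α) =ᵐ[μ]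
      ∑ α ∈ S, c α • x (s α) - ∑ i ∈ I, a i • ∑ α ∈ S, c α • x (s α + -i) := by
  filter_upwards [(S.eventually_all).mpr fun α _ => hε (s α)] with ω hω
  simp only [Finset.sum_apply, Pi.smul_apply, Pi.sub_apply, smul_eq_mul] at hω ⊢
  rw [sum_congr rfl fun α hα => by rw [hω α hα]]
  simp only [mul_sub, sum_sub_distrib, mul_sum, ← sub_eq_add_neg]
  rw [sum_comm]
  exact congrArg _ (sum_congr rfl fun i _ => sum_congr rfl fun α _ => by ring)

lemma integral_sum_smul_mul_of_uncorrelated (hεint : ∀ s t : ℤ, Integrable (ε s * ε t) μ)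
    {σ2 : ℝ} (hεvar : ∀ t : ℤ, ∫ ω, (ε t ω) ^ 2 ∂μ = σ2)
    (hεuncorr : ∀ s t : ℤ, s ≠ t → ∫ ω, ε s ω * ε t ω ∂μ = 0)
    {ι : Type*} (S : Finset ι) (c : ι → ℝ) (s : ι → ℤ) (m : ℤ) :
    μ[(∑ α ∈ S, c α • ε (s α)) * ε m] = σ2 * ∑ α ∈ S with s α = m, c α := by
  have hcov : ∀ α, μ[ε (s α) * ε m] = if s α = m then σ2 else 0 := by
    intro α
    split_ifs with h
    · rw [h, ← hεvar m]
      simp only [Pi.mul_apply, sq]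
    · exact hεuncorr _ _ h
  simp only [sum_mul, smul_mul_assoc, Finset.sum_apply]
  rw [integral_finsetSum _ fun α _ => (hεint _ _).smul (c α), sum_filter, mul_sum]
  refine sum_congr rfl fun α _ => ?_
  simp only [Pi.smul_apply, smul_eq_mul, integral_const_mul, hcov]
  split_ifs <;> ring

theorem sum_filter_eq_zero_of_integral_mul_self_eq_zero
    (hint : ∀ s t : ℤ, Integrable (fun ω => x s ω * x t ω) μ)
    (hγ : ∀ s t : ℤ, ∫ ω, x s ω * x t ω ∂μ = γ (s - t))
    {I : Finset ℕ} {a : ℕ → ℝ} (hε : ∀ t : ℤ, ε t =ᵐ[μ] x t - ∑ i ∈ I, a i • x (t - i))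
    {σ2 : ℝ} (hσ : σ2 ≠ 0) (hεvar : ∀ t : ℤ, ∫ ω, (ε t ω) ^ 2 ∂μ = σ2)
    (hεuncorr : ∀ s t : ℤ, s ≠ t → ∫ ω, ε s ω * ε t ω ∂μ = 0)
    {ι : Type*} {S : Finset ι} {c : ι → ℝ} {s : ι → ℤ}
    (h0 : μ[(∑ α ∈ S, c α • x (s α)) * ∑ α ∈ S, c α • x (s α)] = 0) (m : ℤ) :
    ∑ α ∈ S with s α = m, c α = 0 := by
  have hY := shift_ae_eq_zero_of_integral_mul_self_eq_zero hint hγ h0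
  have hzero : ∑ α ∈ S, c α • ε (s α) =ᵐ[μ] 0 := by
    filter_upwards [sum_smul_ae_eq_sub_sum hε S c s, hY 0,
      (I.eventually_all).mpr fun i _ => hY (-i)] with ω hω h0 hI
    simp_all
  have key := integral_sum_smul_mul_of_uncorrelated (integrable_mul_of_ae_eq_sub_sum hint hε)
    hεvar hεuncorr S c s m
  rw [integral_congr_ae (hzero.mul (ae_of_all _ fun _ => rfl))] at key
  simpa [hσ] using key.symm

lemma dotProduct_mulVec_eq_integral (hint : ∀ s t : ℤ, Integrable (fun ω => x s ω * x t ω) μ)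
    (hγ : ∀ s t : ℤ, ∫ ω, x s ω * x t ω ∂μ = γ (s - t)) {m h : ℕ} (b : ℕ → ℝ) (v : Fin m → ℝ) :
    v ⬝ᵥ (fun (i j : Fin m) => ∑ r ∈ Finset.range h, ∑ s ∈ Finset.range h,
      b r * b s * γ ((((r : ℤ) - ((i : ℕ) : ℤ)) - ((s : ℤ) - ((j : ℕ) : ℤ))))) *ᵥ v =
      μ[(∑ α ∈ univ ×ˢ range h, (v α.1 * b α.2) • x (α.2 - α.1)) *
        ∑ α ∈ univ ×ˢ range h, (v α.1 * b α.2) • x (α.2 - α.1)] := by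
  rw [integral_sum_smul_mul_sum_smul hint hγ]
  simp only [dotProduct, mulVec, sum_product, mul_sum, sum_mul]
  refine sum_congr rfl fun i _ => ?_
  rw [sum_comm]
  exact sum_congr rfl fun r _ => sum_congr rfl fun j _ => sum_congr rfl fun s _ => by ring

theorem integral_mul_self_pos_of_sum_filter_ne_zero
    (hint : ∀ s t : ℤ, Integrable (fun ω => x s ω * x t ω) μ)
    (hγ : ∀ s t : ℤ, ∫ ω, x s ω * x t ω ∂μ = γ (s - t))
    {I : Finset ℕ} {a : ℕ → ℝ} (hε : ∀ t : ℤ, ε t =ᵐ[μ] x t - ∑ i ∈ I, a i • x (t - i))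
    {σ2 : ℝ} (hσ : σ2 ≠ 0) (hεvar : ∀ t : ℤ, ∫ ω, (ε t ω) ^ 2 ∂μ = σ2)
    (hεuncorr : ∀ s t : ℤ, s ≠ t → ∫ ω, ε s ω * ε t ω ∂μ = 0)
    {ι : Type*} {S : Finset ι} {c : ι → ℝ} {s : ι → ℤ} {m : ℤ}
    (hm : ∑ α ∈ S with s α = m, c α ≠ 0) :
    0 < μ[(∑ α ∈ S, c α • x (s α)) * ∑ α ∈ S, c α • x (s α)] :=
  (integral_nonneg fun _ => mul_self_nonneg _).lt_of_ne fun h => hm <|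
    sum_filter_eq_zero_of_integral_mul_self_eq_zero hint hγ hε hσ hεvar hεuncorr h.symm m

end Stationary

theorem stmt_11_general {Ω : Type*} [MeasurableSpace Ω] (μ : Measure Ω)
    (p1 k h : ℕ) (hh : 1 ≤ h)
    (a : ℕ → ℝ)
    (σ2 : ℝ) (hσ : 0 < σ2)
    (x ε : ℤ → Ω → ℝ)
    (hint : ∀ s t : ℤ, Integrable (fun ω => x s ω * x t ω) μ)
    (hAR : ∀ t : ℤ, ∀ᵐ ω ∂μ,
      x (t + 1) ω = (∑ i ∈ Finset.Icc 1 p1, a i * x (t + 1 - (i : ℤ)) ω) + ε (t + 1) ω)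
    (hεvar : ∀ t : ℤ, ∫ ω, (ε t ω) ^ 2 ∂μ = σ2)
    (hεuncorr : ∀ s t : ℤ, s ≠ t → ∫ ω, ε s ω * ε t ω ∂μ = 0)
    (γ : ℤ → ℝ) (hγ : ∀ s t : ℤ, ∫ ω, x s ω * x t ω ∂μ = γ (s - t))
    (b : ℕ → ℝ) (hb0 : b 0 = 1)
    (Γ : ∀ m : ℕ, Matrix (Fin m) (Fin m) ℝ)
    (hΓ : ∀ m, Γ m = fun (i j : Fin m) => γ (((j : ℕ) : ℤ) - ((i : ℕ) : ℤ)))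
    (hpd' : (Γ (k + 1)).PosDef)
    (C : ∀ m : ℕ, Matrix (Fin m) (Fin m) ℝ)
    (hC : ∀ m, C m = fun (i j : Fin m) => ∑ r ∈ Finset.range h, ∑ s ∈ Finset.range h,
      b r * b s * γ ((((r : ℤ) - ((i : ℕ) : ℤ)) - ((s : ℤ) - ((j : ℕ) : ℤ))))) :
    Matrix.trace ((Γ k)⁻¹ * C k) * σ2 < Matrix.trace ((Γ (k + 1))⁻¹ * C (k + 1)) * σ2 := by
  have hΓk : Γ k = (Γ (k + 1)).submatrix Fin.castSucc Fin.castSucc := by rw [hΓ, hΓ]; rfl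
  have hCk : C k = (C (k + 1)).submatrix Fin.castSucc Fin.castSucc := by rw [hC, hC]; rfl
  have hfiber : {α ∈ (univ : Finset (Fin (k + 1))) ×ˢ range h | (α.2 : ℤ) - (α.1 : ℕ) = -k} =
      {(Fin.last k, 0)} := by
    ext ⟨i, r⟩
    simp only [mem_filter, mem_product, mem_univ, mem_range, true_and, mem_singleton,
      Prod.mk.injEq, Fin.ext_iff, Fin.val_last]
    omega
  rw [hΓk, hCk]
  refine mul_lt_mul_of_pos_right (Matrix.trace_inv_mul_lt_of_posDef hpd' ?_) hσ
  rw [hC, dotProduct_mulVec_eq_integral hint hγ]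
  refine integral_mul_self_pos_of_sum_filter_ne_zero hint hγ
    (ae_eq_sub_sum_of_AR hAR) hσ.ne' hεvar hεuncorr (m := -k) ?_
  rw [hfiber, sum_singleton, Matrix.schurVec_last, hb0, one_mul]
  exact one_ne_zero

/-- For a stationary zero-mean AR(p1) process with uncorrelated innovations
of variance `σ2`, MA coefficients `b` (power-series coefficients of `1/A(z)`, `b 0 = 1`),
autocovariance function `γ`, autocovariance matrices `Γ(m)` (positive definite) and
covariance matrices `C(m)` of `∑_{j<h} b_j x_j(m)`, we have for every `k ≥ p1` and `h ≥ 1`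
that the direct-predictor constant is strictly increasing:
`f_{2,h}(k) = tr(Γ(k)⁻¹ C(k))σ2 < tr(Γ(k+1)⁻¹ C(k+1))σ2 = f_{2,h}(k+1)`. -/
theorem stmt_11 {Ω : Type*} [MeasurableSpace Ω] (μ : Measure Ω) [IsProbabilityMeasure μ]
    (p1 k h : ℕ) (hp1 : 1 ≤ p1) (hk : p1 ≤ k) (hh : 1 ≤ h)
    (a : ℕ → ℝ) (hap1 : a p1 ≠ 0) (hazero : ∀ i, p1 < i → a i = 0)
    (σ2 : ℝ) (hσ : 0 < σ2)
    (x ε : ℤ → Ω → ℝ)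
    (hint : ∀ s t : ℤ, Integrable (fun ω => x s ω * x t ω) μ)
    (hAR : ∀ t : ℤ, ∀ᵐ ω ∂μ,
      x (t + 1) ω = (∑ i ∈ Finset.Icc 1 p1, a i * x (t + 1 - (i : ℤ)) ω) + ε (t + 1) ω)
    (hmean : ∀ t : ℤ, ∫ ω, x t ω ∂μ = 0)
    (hεmean : ∀ t : ℤ, ∫ ω, ε t ω ∂μ = 0)
    (hεvar : ∀ t : ℤ, ∫ ω, (ε t ω) ^ 2 ∂μ = σ2)
    (hεuncorr : ∀ s t : ℤ, s ≠ t → ∫ ω, ε s ω * ε t ω ∂μ = 0)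
    (γ : ℤ → ℝ) (hγ : ∀ s t : ℤ, ∫ ω, x s ω * x t ω ∂μ = γ (s - t))
    (b : ℕ → ℝ) (hb0 : b 0 = 1)
    (hb : ∀ n : ℕ, 1 ≤ n →
      b n = ∑ i ∈ Finset.Icc 1 p1, if i ≤ n then a i * b (n - i) else 0)
    (Γ : ∀ m : ℕ, Matrix (Fin m) (Fin m) ℝ)
    (hΓ : ∀ m, Γ m = fun (i j : Fin m) => γ (((j : ℕ) : ℤ) - ((i : ℕ) : ℤ)))
    (hpd : (Γ k).PosDef) (hpd' : (Γ (k + 1)).PosDef)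
    (C : ∀ m : ℕ, Matrix (Fin m) (Fin m) ℝ)
    (hC : ∀ m, C m = fun (i j : Fin m) => ∑ r ∈ Finset.range h, ∑ s ∈ Finset.range h,
      b r * b s * γ ((((r : ℤ) - ((i : ℕ) : ℤ)) - ((s : ℤ) - ((j : ℕ) : ℤ))))) :
    Matrix.trace ((Γ k)⁻¹ * C k) * σ2 < Matrix.trace ((Γ (k + 1))⁻¹ * C (k + 1)) * σ2 :=
  stmt_11_general μ p1 k h hh a σ2 hσ x ε hint hAR hεvar hεuncorr γ hγ b hb0 Γ hΓ hpd' C hC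
end
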